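/- arXiv:2603.02674 — 7 statements merged into one kernel-verified Lean document; each statement's English description precedes it below -/
import Mathlib

section
/- Under the standing hypotheses (M graded projective with each graded piece a finitely generated R-module), for all k, i ∈ P with k ≤ i, the structure map f_{k,i} : M_k → M_i given by multiplication by t^{i−k} is injective. -/
open scoped DirectSum

variable (P : Type) [AddCommGroup P] [Lattice P]
  [CovariantClass P P (· + ·) (· ≤ ·)] [DecidableEq P]
variable (R : Type) [CommRing R]

/-- The monoid algebra `R[U₀]` on the submonoid `U₀` of nonnegative elements of `P`. -/
abbrev PersAlg : Type := AddMonoidAlgebra R ↥(AddSubmonoid.nonneg P)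

/-- The monomial `t^p ∈ R[U₀]` for `p ≥ 0` (and `0` otherwise, a junk value). -/
noncomputable def tp (p : P) : PersAlg P R :=
  letI := Classical.dec (0 ≤ p)
  if h : 0 ≤ p then AddMonoidAlgebra.single (⟨p, h⟩ : ↥(AddSubmonoid.nonneg P)) 1 else 0

/-- A `P`-graded `R[U₀]`-module (persistence module): an `R[U₀]`-module together with an
internal direct sum decomposition `M = ⊕_{a ∈ P} M_a` into `R`-submodules such that
`t^s • M_a ⊆ M_{a+s}` for all `s ≥ 0`. -/
structure PersMod : Type 1 where
  carrier : Type
  [isAddCommGroup : AddCommGroup carrier]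
  [isModuleR : Module R carrier]
  [isModule : Module (PersAlg P R) carrier]
  [isTower : IsScalarTower R (PersAlg P R) carrier]
  deg : P → Submodule R carrier
  isInternal : DirectSum.IsInternal deg
  tp_smul_mem : ∀ (s : P), 0 ≤ s → ∀ (a : P) (x : carrier),
    x ∈ deg a → tp P R s • x ∈ deg (a + s)

attribute [instance] PersMod.isAddCommGroup PersMod.isModuleR PersMod.isModule PersMod.isTower

/-- Scalar multiplication by a fixed element of `R[U₀]`, as an `R`-linear map. -/
noncomputable def smulMapR (M : PersMod P R) (a : PersAlg P R) : M.carrier →ₗ[R] M.carrier :=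
  (LinearMap.lsmul (PersAlg P R) M.carrier a).restrictScalars R

/-- `D_r ⊆ M_r`, the sum of the images of all `M_q`, `q < r`, under `t^{r-q}`. -/
noncomputable def Dsub (M : PersMod P R) (r : P) : Submodule R M.carrier :=
  ⨆ q : {q : P // q < r}, Submodule.map (smulMapR P R M (tp P R (r - q.1))) (M.deg q.1)

/-- `M` is graded free: it admits an `R[U₀]`-basis of homogeneous elements. -/
def IsGradedFree (M : PersMod P R) : Prop :=
  ∃ (Λ : Type) (d : Λ → P) (b : Module.Basis Λ (PersAlg P R) M.carrier),
    ∀ η, b η ∈ M.deg (d η)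

/-- `M` is graded projective: it is a graded direct summand of a graded free module. -/
def IsGradedProjective (M : PersMod P R) : Prop :=
  ∃ F : PersMod P R, IsGradedFree P R F ∧
    ∃ (ι : M.carrier →ₗ[PersAlg P R] F.carrier) (π : F.carrier →ₗ[PersAlg P R] M.carrier),
      (∀ (a : P), ∀ x ∈ M.deg a, ι x ∈ F.deg a) ∧
      (∀ (a : P), ∀ x ∈ F.deg a, π x ∈ M.deg a) ∧
      π.comp ι = LinearMap.id

/-- An `R[U₀]`-submodule `S` of a graded module `F` is graded if it is the sum of its
homogeneous parts `S ∩ F_a`. -/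
def IsGradedSubmodule (F : PersMod P R) (S : Submodule (PersAlg P R) F.carrier) : Prop :=
  S.restrictScalars R = ⨆ a : P, (S.restrictScalars R ⊓ F.deg a)

/-- For a graded submodule `S ⊆ F`, the submodule `D_r` of sums of images of the homogeneous
pieces `S ∩ F_q`, `q < r`, under `t^{r-q}`. -/
noncomputable def DsubOf (F : PersMod P R) (S : Submodule (PersAlg P R) F.carrier) (r : P) :
    Submodule R F.carrier :=
  ⨆ q : {q : P // q < r},
    Submodule.map (smulMapR P R F (tp P R (r - q.1))) (S.restrictScalars R ⊓ F.deg q.1)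

/-! Since `U₀` is cancellative, `t^s` is a non-zero-divisor of `R[U₀]`. It therefore acts
injectively on a free module, coordinatewise in a basis, and hence on every direct summand
of one. -/

theorem AddMonoidAlgebra.isLeftRegular_single_one {k G : Type*} [Semiring k] [AddMonoid G]
    [IsCancelAdd G] (a : G) : IsLeftRegular (single a (1 : k)) := by
  intro f g h
  ext m
  simpa using congr(($h).coeff (a + m))

theorem Module.Basis.isSMulRegular {ι A M : Type*} [Semiring A] [AddCommMonoid M] [Module A M]
    (b : Module.Basis ι A M) {a : A} (ha : IsLeftRegular a) : IsSMulRegular M a :=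
  ha.isSMulRegular.finsupp.of_injective b.repr b.repr.injective

theorem IsGradedFree.isSMulRegular_tp {F : PersMod P R} (hF : IsGradedFree P R F) {s : P}
    (hs : 0 ≤ s) : IsSMulRegular F.carrier (tp P R s) := by
  obtain ⟨Λ, d, b, -⟩ := hF
  have htp : IsLeftRegular (tp P R s) := by
    rw [tp, dif_pos hs]
    exact AddMonoidAlgebra.isLeftRegular_single_one _
  exact b.isSMulRegular htp

theorem IsGradedProjective.isSMulRegular_tp {M : PersMod P R} (hM : IsGradedProjective P R M)
    {s : P} (hs : 0 ≤ s) : IsSMulRegular M.carrier (tp P R s) := by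
  obtain ⟨F, hF, ι, π, -, -, hπι⟩ := hM
  have hι : Function.Injective ι :=
    Function.LeftInverse.injective (g := π) (LinearMap.congr_fun hπι)
  exact (hF.isSMulRegular_tp P R hs).of_injective ι hι

theorem structure_map_injective
    (M : PersMod P R) (hproj : IsGradedProjective P R M)
    (k i : P) (hki : k ≤ i) :
    ∀ x ∈ M.deg k, ∀ y ∈ M.deg k, tp P R (i - k) • x = tp P R (i - k) • y → x = y :=
  fun _ _ _ _ h => hproj.isSMulRegular_tp P R (sub_nonneg.2 hki) h
end

section
/- Let F be a graded free R[U₀]-module with a basis {u_η}_{η∈Λ} of homogeneous elements and let 0 ≠ x ∈ F_i, written as x = Σ_{η∈I_x} c_η t^{i−|u_η|} u_η where I_x ⊆ Λ is finite and each c_η ∈ R is nonzero (so |u_η| ≤ i for all η ∈ I_x). Let m be the join in the lattice P of the finite set {|u_η| : η ∈ I_x}. Then m is the least element of S_x^F: m ∈ S_x^F, and m ≤ ℓ for every ℓ ∈ S_x^F. -/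
open scoped DirectSum

variable (P : Type) [AddCommGroup P] [Lattice P]
  [CovariantClass P P (· + ·) (· ≤ ·)] [DecidableEq P]
variable (R : Type) [CommRing R]

/-! Writing `m` for the join of the degrees `|u_η|`, each term `t^{i-|u_η|} u_η` equals
`t^{i-m} t^{m-|u_η|} u_η`, so `x = t^{i-m} z` with `z ∈ F_m`. Conversely, if `x = t^{i-ℓ} z`,
the `u_η`-coordinate of `x` in the basis is `c_η t^{i-|u_η|}` on one hand and a multiple of
`t^{i-ℓ}` on the other. Since `c_η ≠ 0`, comparing coefficients of the monomial `t^{i-|u_η|}`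
gives `i - ℓ ≤ i - |u_η|`, that is `|u_η| ≤ ℓ` for every `η`, hence `m ≤ ℓ`. -/

section

variable {P R}

lemma tp_of_nonneg {p : P} (hp : 0 ≤ p) :
    tp P R p = AddMonoidAlgebra.single (⟨p, hp⟩ : ↥(AddSubmonoid.nonneg P)) 1 :=
  dif_pos hp

lemma tp_mul_tp {p q : P} (hp : 0 ≤ p) (hq : 0 ≤ q) :
    tp P R p * tp P R q = tp P R (p + q) := by
  rw [tp_of_nonneg hp, tp_of_nonneg hq, tp_of_nonneg (add_nonneg hp hq),
    AddMonoidAlgebra.single_mul_single, one_mul]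
  rfl

lemma tp_sub_mul_tp_sub {a b c : P} (hab : a ≤ b) (hbc : b ≤ c) :
    tp P R (c - b) * tp P R (b - a) = tp P R (c - a) := by
  rw [tp_mul_tp (sub_nonneg.2 hbc) (sub_nonneg.2 hab), sub_add_sub_cancel]

lemma le_of_tp_mul_eq_smul_tp {p q : P} (hp : 0 ≤ p) (hq : 0 ≤ q) {f : PersAlg P R} {c : R}
    (hc : c ≠ 0) (h : tp P R p * f = c • tp P R q) : p ≤ q := by
  by_contra hpq
  apply hc
  have hcoeff := congrArg (fun g : PersAlg P R => g.coeff ⟨q, hq⟩) h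
  simp only [tp_of_nonneg hq, AddMonoidAlgebra.coeff_smul_apply,
    AddMonoidAlgebra.coeff_single, Finsupp.single_eq_same, smul_eq_mul, mul_one] at hcoeff
  rw [← hcoeff, tp_of_nonneg hp]
  refine AddMonoidAlgebra.coeff_single_mul_of_forall_add_ne _ _ fun a ha => hpq ?_
  have hval : p + a.1 = q := congrArg Subtype.val ha
  exact hval ▸ le_add_of_nonneg_right a.2

theorem Module.Basis.repr_sum_smul_smul_self_of_mem {ι A S M : Type*} [CommSemiring S]
    [Semiring A] [Algebra S A] [AddCommMonoid M] [Module A M] [Module S M]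
    [IsScalarTower S A M] (b : Module.Basis ι A M) {I : Finset ι} (c : ι → S) (a : ι → A)
    {j : ι} (hj : j ∈ I) :
    b.repr (∑ η ∈ I, c η • (a η • b η)) j = c j • a j := by
  classical
  simp only [← smul_assoc, map_sum, map_smul, Module.Basis.repr_self, Finsupp.coe_finsetSum,
    Finset.sum_apply, Finsupp.smul_apply, Finsupp.single_apply, smul_eq_mul, mul_ite, mul_one,
    mul_zero, Finset.sum_ite_eq', if_pos hj]

lemma PersMod.tp_sub_smul_mem (M : PersMod P R) {q r : P} (hqr : q ≤ r) {y : M.carrier}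
    (hy : y ∈ M.deg q) : tp P R (r - q) • y ∈ M.deg r := by
  simpa using M.tp_smul_mem (r - q) (sub_nonneg.2 hqr) q y hy

end

theorem birth_set_least_F
    (F : PersMod P R) (Λ : Type) (d : Λ → P) (b : Module.Basis Λ (PersAlg P R) F.carrier)
    (hb : ∀ η, b η ∈ F.deg (d η))
    (i : P) (x : F.carrier)
    (I : Finset Λ) (hI : I.Nonempty) (c : Λ → R) (hc : ∀ η ∈ I, c η ≠ 0)
    (hdle : ∀ η ∈ I, d η ≤ i)
    (hrep : x = ∑ η ∈ I, c η • (tp P R (i - d η) • b η)) :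
    IsLeast {ℓ : P | ℓ ≤ i ∧ ∃ z ∈ F.deg ℓ, tp P R (i - ℓ) • z = x} (I.sup' hI d) := by
  set m := I.sup' hI d
  have hmi : m ≤ i := Finset.sup'_le hI d hdle
  have hdm : ∀ η ∈ I, d η ≤ m := fun η hη => Finset.le_sup' d hη
  refine ⟨⟨hmi, ∑ η ∈ I, c η • (tp P R (m - d η) • b η), ?_, ?_⟩, ?_⟩
  · exact sum_mem fun η hη => Submodule.smul_mem _ _ (F.tp_sub_smul_mem (hdm η hη) (hb η))
  · rw [hrep, Finset.smul_sum]
    refine Finset.sum_congr rfl fun η hη => ?_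
    rw [smul_comm, smul_smul, tp_sub_mul_tp_sub (hdm η hη) hmi]
  · rintro ℓ ⟨hℓi, z, -, rfl⟩
    refine Finset.sup'_le hI d fun η hη => ?_
    have hdiv : tp P R (i - ℓ) * b.repr z η = c η • tp P R (i - d η) := by
      rw [← b.repr_sum_smul_smul_self_of_mem c (fun η => tp P R (i - d η)) hη, ← hrep, map_smul]
      rfl
    exact (sub_le_sub_iff_left i).1 <| le_of_tp_mul_eq_smul_tp (sub_nonneg.2 hℓi)
      (sub_nonneg.2 (hdle η hη)) (hc η hη) hdiv
end

section
/- Under the standing hypotheses, let 0 ≠ x ∈ M_i be written in terms of the homogeneous basis of F as x = Σ_{η∈I_x} c_η t^{i−|u_η|} u_η with I_x finite and each c_η ∈ R nonzero, and let m be the join in P of {|u_η| : η ∈ I_x}. Then m is the least element of S_x^M: m ∈ S_x^M and m ≤ ℓ for every ℓ ∈ S_x^M. -/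
open scoped DirectSum

variable (P : Type) [AddCommGroup P] [Lattice P]
  [CovariantClass P P (· + ·) (· ≤ ·)] [DecidableEq P]
variable (R : Type) [CommRing R]

/-!
The join `m` is a birth degree: `y₀ = ∑ c_η t^{m - |u_η|} u_η` is homogeneous of degree `m` with
`t^{i-m} y₀ = x`, and replacing `y₀` by the `M`-component of `y₀` keeps this, since `t^{i-m}`
kills the `N`-component. It is the least one: if `t^{i-ℓ} y = x`, comparing the `u_η`-coordinates
gives `c_η t^{i-|u_η|} = t^{i-ℓ} · (coordinate of y)`, so `t^{i-ℓ}` divides `t^{i-|u_η|}`,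
i.e. `|u_η| ≤ ℓ`.
-/

section BirthSet

variable {P : Type} [AddCommGroup P] [Lattice P] [CovariantClass P P (· + ·) (· ≤ ·)]
variable {R : Type} [CommRing R]

theorem tp_add {a b : P} (ha : 0 ≤ a) (hb : 0 ≤ b) :
    tp P R (a + b) = tp P R a * tp P R b := by
  rw [tp, tp, tp, dif_pos (add_nonneg ha hb), dif_pos ha, dif_pos hb,
    AddMonoidAlgebra.single_mul_single, one_mul]
  rfl

theorem tp_smul_tp_smul {X : Type*} [AddCommMonoid X] [Module (PersAlg P R) X]
    {a b : P} (ha : 0 ≤ a) (hb : 0 ≤ b) (z : X) :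
    tp P R a • tp P R b • z = tp P R (a + b) • z := by
  rw [tp_add ha hb, mul_smul]

theorem le_of_smul_tp_eq_tp_mul {p q : P} (hp : 0 ≤ p) (hq : 0 ≤ q) {r : R} (hr : r ≠ 0)
    {f : PersAlg P R} (h : r • tp P R p = tp P R q * f) : q ≤ p := by
  rw [tp, tp, dif_pos hp, dif_pos hq, AddMonoidAlgebra.smul_single', mul_one] at h
  by_contra hqp
  have hcoeff := congrArg (fun g : PersAlg P R => g.coeff ⟨p, hp⟩) h
  simp only [AddMonoidAlgebra.coeff_single, Finsupp.single_eq_same] at hcoeff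
  refine hr (hcoeff.trans (AddMonoidAlgebra.coeff_single_mul_of_forall_add_ne _ _ ?_))
  intro u hu
  exact hqp (le_add_of_nonneg_right (a := q) u.2 |>.trans_eq (congrArg Subtype.val hu))

theorem Module.Basis.repr_finset_sum_smul_apply {ι A X : Type*} [Semiring A] [AddCommMonoid X]
    [Module A X] (b : Module.Basis ι A X) (s : Finset ι) (f : ι → A) {j : ι} (hj : j ∈ s) :
    b.repr (∑ i ∈ s, f i • b i) j = f j := by
  classical
  simp [map_sum, Finsupp.single_apply, hj]

variable [DecidableEq P]

theorem PersMod.tp_sub_smul_mem_deg (F : PersMod P R) {a b : P} (hab : a ≤ b) {z : F.carrier}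
    (hz : z ∈ F.deg a) : tp P R (b - a) • z ∈ F.deg b := by
  simpa only [add_sub_cancel] using F.tp_smul_mem (b - a) (sub_nonneg.2 hab) a z hz

theorem IsGradedSubmodule.decompose_mem {F : PersMod P R}
    {S : Submodule (PersAlg P R) F.carrier} (hS : IsGradedSubmodule P R F S)
    [DirectSum.Decomposition F.deg] (m : P) {v : F.carrier} (hv : v ∈ S) :
    (DirectSum.decompose F.deg v m : F.carrier) ∈ S := by
  have hv' : v ∈ ⨆ a : P, (S.restrictScalars R ⊓ F.deg a) := hS ▸ hv
  clear hv
  induction hv' using Submodule.iSup_induction' with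
  | mem a w hw =>
    obtain ⟨hwS, hwa⟩ := hw
    by_cases hma : a = m
    · subst hma
      rwa [DirectSum.decompose_of_mem_same F.deg hwa]
    · rw [DirectSum.decompose_of_mem_ne F.deg hwa hma]
      exact S.zero_mem
  | zero => simp
  | add w w' _ _ hw hw' =>
    rw [DirectSum.decompose_add, DirectSum.add_apply, Submodule.coe_add]
    exact S.add_mem hw hw'

theorem exists_mem_deg_smul_eq_of_isCompl {F : PersMod P R}
    {M N : Submodule (PersAlg P R) F.carrier} (hM : IsGradedSubmodule P R F M)
    (hN : IsGradedSubmodule P R F N) (hMN : IsCompl M N) {m : P} {y : F.carrier}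
    (hy : y ∈ F.deg m) (a : PersAlg P R) (hay : a • y ∈ M) :
    ∃ v ∈ M, v ∈ F.deg m ∧ a • v = a • y := by
  let := F.isInternal.chooseDecomposition
  obtain ⟨v, hvM, n, hnN, hvn⟩ := Submodule.mem_sup.1 (hMN.sup_eq_top ▸ Submodule.mem_top (x := y))
  set v' : F.carrier := (DirectSum.decompose F.deg v m : F.carrier)
  set n' : F.carrier := (DirectSum.decompose F.deg n m : F.carrier)
  have hsum : v' + n' = y := by
    rw [← Submodule.coe_add, ← DirectSum.add_apply, ← DirectSum.decompose_add, hvn,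
      DirectSum.decompose_of_mem_same F.deg hy]
  have hv'M : v' ∈ M := hM.decompose_mem m hvM
  have han' : a • n' = 0 := by
    have hanM : a • n' ∈ M := by
      rw [← add_sub_cancel_left (a • v') (a • n'), ← smul_add, hsum]
      exact M.sub_mem hay (M.smul_mem a hv'M)
    exact (Submodule.disjoint_def.1 hMN.disjoint) _ hanM (N.smul_mem a (hN.decompose_mem m hnN))
  exact ⟨v', hv'M, SetLike.coe_mem _, by rw [← hsum, smul_add, han', add_zero]⟩

end BirthSet

theorem birth_set_least_M
    (F : PersMod P R) (Λ : Type) (d : Λ → P) (b : Module.Basis Λ (PersAlg P R) F.carrier)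
    (hb : ∀ η, b η ∈ F.deg (d η))
    (M N : Submodule (PersAlg P R) F.carrier)
    (hM : IsGradedSubmodule P R F M) (hN : IsGradedSubmodule P R F N)
    (hcompl : IsCompl M N)
    (i : P) (x : F.carrier) (hxM : x ∈ M)
    (I : Finset Λ) (hI : I.Nonempty) (c : Λ → R) (hc : ∀ η ∈ I, c η ≠ 0)
    (hdle : ∀ η ∈ I, d η ≤ i)
    (hrep : x = ∑ η ∈ I, c η • (tp P R (i - d η) • b η)) :
    IsLeast {ℓ : P | ℓ ≤ i ∧ ∃ y, y ∈ M ∧ y ∈ F.deg ℓ ∧ tp P R (i - ℓ) • y = x}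
      (I.sup' hI d) := by
  set m := I.sup' hI d
  have hmi : m ≤ i := I.sup'_le hI d hdle
  have hdm : ∀ η ∈ I, d η ≤ m := fun η hη => I.le_sup' d hη
  refine ⟨⟨hmi, ?_⟩, fun ℓ ⟨hℓi, y, _, _, hyx⟩ => I.sup'_le hI d fun η hη => ?_⟩
  · set y₀ := ∑ η ∈ I, c η • (tp P R (m - d η) • b η)
    have hy₀ : y₀ ∈ F.deg m := Submodule.sum_mem _ fun η hη =>
      Submodule.smul_mem _ _ (F.tp_sub_smul_mem_deg (hdm η hη) (hb η))
    have hy₀x : tp P R (i - m) • y₀ = x := by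
      simp only [y₀, hrep, Finset.smul_sum, smul_comm (tp P R (i - m)) (c _)]
      refine Finset.sum_congr rfl fun η hη => ?_
      rw [tp_smul_tp_smul (sub_nonneg.2 hmi) (sub_nonneg.2 (hdm η hη)), sub_add_sub_cancel]
    obtain ⟨v, hvM, hvm, hv⟩ :=
      exists_mem_deg_smul_eq_of_isCompl hM hN hcompl hy₀ _ (hy₀x ▸ hxM)
    exact ⟨v, hvM, hvm, hv.trans hy₀x⟩
  · have hcoeff : c η • tp P R (i - d η) = tp P R (i - ℓ) * b.repr y η := by
      have hrep' : x = ∑ η ∈ I, (c η • tp P R (i - d η)) • b η := by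
        simpa only [smul_assoc] using hrep
      rw [← b.repr_finset_sum_smul_apply I (fun η => c η • tp P R (i - d η)) hη, ← hrep', ← hyx,
        map_smul]
      rfl
    exact (sub_le_sub_iff_left i).1 <|
      le_of_smul_tp_eq_tp_mul (sub_nonneg.2 (hdle η hη)) (sub_nonneg.2 hℓi) (hc η hη) hcoeff
end

section
/- Under the standing hypotheses, fix i ∈ P and, for each r < i, elements e_1^r, …, e_{b_r}^r ∈ M_r whose cosets modulo D_r form an R-basis of M_r/D_r. Then the family { t^{i−r} e_j^r : r < i, 1 ≤ j ≤ b_r } is R-linearly independent in M_i. -/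
open scoped DirectSum

variable (P : Type) [AddCommGroup P] [Lattice P]
  [CovariantClass P P (· + ·) (· ≤ ·)] [DecidableEq P]
variable (R : Type) [CommRing R]

/-!
Embed `M` as a graded direct summand of a graded free module `F` with homogeneous
`R[U₀]`-basis `b η ∈ F_{d η}`. The elements `t^s • b η` form an `R`-basis of `F`, and an element
of `F_a` whose coefficients at `s = 0` all vanish lies in `D_a`: every other basis vector
occurring in it is `t^{a - d η} • b η` with `d η < a`. Given a relation `∑ t^{i-r} • y_r = 0`
with `y_r ∈ M_r`, choose `m` maximal among the `r` that occur; the coefficient of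
`t^{i-m} • b η` only sees `y_m`, so `y_m ∈ D_m`, and independence modulo `D_m` kills the
coefficients in degree `m`.
-/

theorem Module.Basis.repr_eq_zero_of_mem_of_ne {ι κ S N : Type*} [Ring S] [AddCommGroup N]
    [Module S N] {A : ι → Submodule S N} (hA : iSupIndep A) (B : Module.Basis κ S N)
    {deg : κ → ι} (hB : ∀ k, B k ∈ A (deg k)) {a : ι} {x : N} (hx : x ∈ A a) {k : κ}
    (hk : deg k ≠ a) : B.repr x k = 0 := by
  classical
  set c := (B.repr x).filter (deg · = a)
  set c' := (B.repr x).filter (deg · ≠ a)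
  have hc : Finsupp.linearCombination S B c ∈ A a := by
    refine Submodule.sum_mem _ fun q hq ↦ Submodule.smul_mem _ _ ?_
    rw [Finsupp.support_filter, Finset.mem_filter] at hq
    exact hq.2 ▸ hB q
  have hc' : Finsupp.linearCombination S B c' ∈ ⨆ j ≠ a, A j := by
    refine Submodule.sum_mem _ fun q hq ↦ Submodule.smul_mem _ _ ?_
    rw [Finsupp.support_filter, Finset.mem_filter] at hq
    exact le_iSup₂ (f := fun j _ ↦ A j) (deg q) hq.2 (hB q)
  have hsplit : Finsupp.linearCombination S B c' = x - Finsupp.linearCombination S B c := by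
    rw [eq_sub_iff_add_eq, ← map_add, add_comm, Finsupp.filter_add_filter_not,
      B.linearCombination_repr]
  have hzero : c' = 0 := by
    rw [← B.repr_linearCombination c', Submodule.disjoint_def.mp (hA a).symm _ hc'
      (hsplit ▸ sub_mem hx hc), map_zero]
  simpa [c', hk] using DFunLike.congr_fun hzero k

section

variable {P R}

namespace PersMod

section GradedFree

variable {F : PersMod P R} {Λ : Type} (b : Module.Basis Λ (PersAlg P R) F.carrier)

noncomputable def monomialBasis : Module.Basis (AddSubmonoid.nonneg P × Λ) R F.carrier :=
  (AddMonoidAlgebra.basis _ R).smulTower b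

theorem monomialBasis_apply (q : AddSubmonoid.nonneg P × Λ) :
    monomialBasis b q = tp P R q.1 • b q.2 := by
  have hq : (0 : P) ≤ q.1 := q.1.prop
  rw [monomialBasis, Module.Basis.smulTower_apply, tp, dif_pos hq]
  rfl

theorem monomialBasis_repr (x : F.carrier) (q : AddSubmonoid.nonneg P × Λ) :
    (monomialBasis b).repr x q = (b.repr x q.2).coeff q.1 :=
  rfl

theorem monomialBasis_repr_tp_smul (u : P) (x : F.carrier) (q : AddSubmonoid.nonneg P × Λ) :
    (monomialBasis b).repr (tp P R u • x) q = (tp P R u * b.repr x q.2).coeff q.1 := by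
  rw [monomialBasis_repr, map_smul]
  rfl

theorem monomialBasis_repr_tp_smul_self {u : P} (hu : 0 ≤ u) (x : F.carrier) (η : Λ) :
    (monomialBasis b).repr (tp P R u • x) (⟨u, hu⟩, η) = (monomialBasis b).repr x (0, η) := by
  rw [monomialBasis_repr_tp_smul, monomialBasis_repr, tp, dif_pos hu]
  simpa using AddMonoidAlgebra.coeff_single_mul_add (b.repr x η) (1 : R) ⟨u, hu⟩ 0

theorem monomialBasis_repr_tp_smul_of_not_le {u : P} (x : F.carrier)
    (q : AddSubmonoid.nonneg P × Λ) (h : ¬u ≤ q.1) :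
    (monomialBasis b).repr (tp P R u • x) q = 0 := by
  rw [monomialBasis_repr_tp_smul, tp]
  split_ifs with hu
  · refine AddMonoidAlgebra.coeff_single_mul_of_forall_add_ne _ _ fun s hs ↦ h ?_
    rw [← hs]
    exact le_add_of_nonneg_right s.2
  · simp

variable {d : Λ → P}

theorem monomialBasis_mem (hb : ∀ η, b η ∈ F.deg (d η)) (q : AddSubmonoid.nonneg P × Λ) :
    monomialBasis b q ∈ F.deg (d q.2 + q.1) :=
  monomialBasis_apply b q ▸ F.tp_smul_mem _ q.1.prop _ _ (hb q.2)

theorem monomialBasis_repr_eq_zero_of_mem (hb : ∀ η, b η ∈ F.deg (d η)) {a : P} {x : F.carrier}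
    (hx : x ∈ F.deg a) {q : AddSubmonoid.nonneg P × Λ} (hq : d q.2 + q.1 ≠ a) :
    (monomialBasis b).repr x q = 0 :=
  (monomialBasis b).repr_eq_zero_of_mem_of_ne F.isInternal.submodule_iSupIndep
    (monomialBasis_mem b hb) hx hq

theorem mem_Dsub_of_monomialBasis_repr_zero (hb : ∀ η, b η ∈ F.deg (d η)) {a : P}
    {x : F.carrier} (hx : x ∈ F.deg a) (h0 : ∀ η, (monomialBasis b).repr x (0, η) = 0) :
    x ∈ Dsub P R F a := by
  rw [← (monomialBasis b).linearCombination_repr x]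
  refine Submodule.sum_mem _ fun q hq ↦ Submodule.smul_mem _ _ ?_
  rw [Finsupp.mem_support_iff] at hq
  have hdeg : d q.2 + q.1 = a := by
    by_contra h
    exact hq (monomialBasis_repr_eq_zero_of_mem b hb hx h)
  have hpos : (0 : P) < q.1 := by
    refine lt_of_le_of_ne q.1.prop fun h ↦ hq ?_
    rw [show q = (0, q.2) from Prod.ext (Subtype.ext h.symm) rfl]
    exact h0 q.2
  have hlt : d q.2 < a := hdeg ▸ lt_add_of_pos_right _ hpos
  refine Submodule.mem_iSup_of_mem ⟨d q.2, hlt⟩ ⟨b q.2, hb q.2, ?_⟩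
  change tp P R (a - d q.2) • b q.2 = _
  rw [monomialBasis_apply, ← hdeg, add_sub_cancel_left]

end GradedFree

theorem map_mem_Dsub {M N : PersMod P R} (f : M.carrier →ₗ[PersAlg P R] N.carrier)
    (hf : ∀ a, ∀ x ∈ M.deg a, f x ∈ N.deg a) {r : P} {x : M.carrier} (hx : x ∈ Dsub P R M r) :
    f x ∈ Dsub P R N r := by
  refine (iSup_le fun q ↦ ?_ : Dsub P R M r ≤ (Dsub P R N r).comap (f.restrictScalars R)) hx
  rintro _ ⟨y, hy, rfl⟩
  exact Submodule.mem_iSup_of_mem q ⟨f y, hf q y hy, (map_smul f _ y).symm⟩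

end PersMod

theorem IsGradedFree.mem_Dsub_of_sum_tp_smul_eq_zero {F : PersMod P R} (hF : IsGradedFree P R F)
    {κ : Type*} {T : Finset κ} (w : κ → P) (y : κ → F.carrier) {i : P} {m : κ} (hm : m ∈ T)
    (hmi : w m ≤ i) (hmax : ∀ k ∈ T, w m ≤ w k → k = m) (hy : y m ∈ F.deg (w m))
    (hsum : ∑ k ∈ T, tp P R (i - w k) • y k = 0) : y m ∈ Dsub P R F (w m) := by
  obtain ⟨Λ, d, b, hb⟩ := hF
  refine PersMod.mem_Dsub_of_monomialBasis_repr_zero b hb hy fun η ↦ ?_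
  have hs : 0 ≤ i - w m := sub_nonneg.mpr hmi
  have := congrArg (fun x ↦ (PersMod.monomialBasis b).repr x (⟨i - w m, hs⟩, η)) hsum
  simp only [map_sum, Finsupp.coe_finsetSum, Finset.sum_apply, map_zero, Finsupp.zero_apply] at this
  rwa [Finset.sum_eq_single m ?_ (fun h ↦ (h hm).elim),
    PersMod.monomialBasis_repr_tp_smul_self] at this
  intro k hk hkm
  refine PersMod.monomialBasis_repr_tp_smul_of_not_le b _ _ fun hle ↦ hkm (hmax k hk ?_)
  exact (sub_le_sub_iff_left i).mp hle

theorem IsGradedProjective.mem_Dsub_of_sum_tp_smul_eq_zero {M : PersMod P R}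
    (hM : IsGradedProjective P R M) {κ : Type*} {T : Finset κ} (w : κ → P) (y : κ → M.carrier)
    {i : P} {m : κ} (hm : m ∈ T) (hmi : w m ≤ i) (hmax : ∀ k ∈ T, w m ≤ w k → k = m)
    (hy : y m ∈ M.deg (w m)) (hsum : ∑ k ∈ T, tp P R (i - w k) • y k = 0) :
    y m ∈ Dsub P R M (w m) := by
  obtain ⟨F, hF, ι, π, hι, hπ, hπι⟩ := hM
  have hF_sum : ∑ k ∈ T, tp P R (i - w k) • ι (y k) = 0 := by
    simpa using congrArg ι hsum
  have := PersMod.map_mem_Dsub π hπ <|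
    hF.mem_Dsub_of_sum_tp_smul_eq_zero w (ι ∘ y) hm hmi hmax (hι _ _ hy) hF_sum
  rwa [Function.comp_apply, ← LinearMap.comp_apply, hπι, LinearMap.id_apply] at this

end

theorem images_linearIndependent
    (M : PersMod P R) (hproj : IsGradedProjective P R M)
    (i : P) (n : P → ℕ) (e : (r : P) → Fin (n r) → M.carrier)
    (hdeg : ∀ r, r < i → ∀ j, e r j ∈ M.deg r)
    (hli : ∀ r, r < i → LinearIndependent R (fun j => (Dsub P R M r).mkQ (e r j))) :
    LinearIndependent R
      (fun p : Σ r : {r : P // r < i}, Fin (n r.1) => tp P R (i - p.1.1) • e p.1.1 p.2) := by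
  rw [linearIndependent_iff]
  intro g hg
  by_contra hg0
  obtain ⟨m, hm⟩ := g.splitSupport.exists_maximal <| by
    simpa [Finsupp.splitSupport, Finsupp.support_nonempty_iff] using hg0
  set y : {r // r < i} → M.carrier := fun r ↦ ∑ j, g ⟨r, j⟩ • e r j
  have hsum : ∑ r ∈ g.splitSupport, tp P R (i - r) • y r = 0 := by
    rw [← hg, Finsupp.linearCombination_apply, Finsupp.sigma_sum]
    refine Finset.sum_congr rfl fun r _ ↦ ?_
    simp [y, Finsupp.sum_fintype, Finsupp.split_apply, Finset.smul_sum, smul_comm (tp P R _)]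
  have hym : y m ∈ Dsub P R M m :=
    hproj.mem_Dsub_of_sum_tp_smul_eq_zero Subtype.val y hm.prop m.2.le
      (fun k hk hle ↦ le_antisymm (hm.2 hk hle) hle)
      (Submodule.sum_mem _ fun j _ ↦ Submodule.smul_mem _ _ (hdeg m m.2 j)) hsum
  have hgm : ∀ j, g ⟨m, j⟩ = 0 := by
    refine Fintype.linearIndependent_iff.mp (hli m m.2) _ ?_
    simp_rw [← LinearMap.map_smul, ← map_sum]
    exact (Submodule.Quotient.mk_eq_zero _).mpr hym
  exact (Finsupp.mem_splitSupport_iff_nonzero g m).mp hm.prop (Finsupp.ext hgm)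
end

section
/- Under the standing hypotheses, for every i ∈ P the sum Σ_{r < i} b_r is finite, where b_r is the rank of the free R-module M_r/D_r; in particular, the set { r ∈ P : r < i and D_r ≠ M_r } is finite. -/
open scoped DirectSum

variable (P : Type) [AddCommGroup P] [Lattice P]
  [CovariantClass P P (· + ·) (· ≤ ·)] [DecidableEq P]
variable (R : Type) [CommRing R]

/-!
Embed `M` as a graded summand of a graded free module `F` with homogeneous basis `e_η` of
degrees `d η`. Over `R`, `F` has the basis of monomials `t^g e_η`, homogeneous of degree
`d η + g`; hence an element of `F_r` lies in `D_r(F)` as soon as its coefficients at the `e_η`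
with `d η = r` vanish. For each `r < i` with `D_r ≠ M_r` pick `x_r ∈ M_r \ D_r`; its image in
`F` has a nonzero coefficient at some `e_{η_r}` of degree `r`. The elements `t^{i-r} x_r ∈ M_i`
are then triangular with respect to the coordinates at `t^{i-r} e_{η_r}`, so they are linearly
independent in the finitely generated module `M_i` over the noetherian ring `R`, and there are
only finitely many of them.
-/

section GeneralLinearAlgebra

theorem iSupIndep.eq_of_le_of_iSup_eq_top {α ι : Type*} [CompleteLattice α]
    [IsModularLattice α] {N p : ι → α} (hN : iSupIndep N) (hle : ∀ i, p i ≤ N i)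
    (htop : ⨆ i, p i = ⊤) (i : ι) :
    N i = p i := by
  have hrest : (⨆ (j) (_ : j ≠ i), p j) ⊓ N i = ⊥ :=
    le_bot_iff.1 <| (inf_le_inf_right _ (iSup₂_mono fun j _ => hle j)).trans (hN i).symm.le_bot
  calc N i = (p i ⊔ ⨆ (j) (_ : j ≠ i), p j) ⊓ N i := by
        rw [← iSup_split_single, htop, top_inf_eq]
    _ = p i := by rw [sup_inf_assoc_of_le _ (hle i), hrest, sup_bot_eq]

theorem Module.Basis.repr_eq_zero_of_mem_of_iSupIndep {R M ι κ : Type*} [Ring R]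
    [AddCommGroup M] [Module R M] {N : ι → Submodule R M} (hN : iSupIndep N)
    (b : Module.Basis κ R M) (deg : κ → ι) (hb : ∀ k, b k ∈ N (deg k)) {i : ι} {x : M}
    (hx : x ∈ N i) {k : κ} (hk : deg k ≠ i) : b.repr x k = 0 := by
  have hspan :=
    hN.eq_of_le_of_iSup_eq_top (p := fun i => Submodule.span R (b '' (deg ⁻¹' {i})))
      (fun i => Submodule.span_le.2 <| by rintro _ ⟨k, rfl, rfl⟩; exact hb k) (by
        rw [Submodule.iSup_span, ← Set.image_iUnion, ← Set.preimage_iUnion,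
        Set.iUnion_singleton_eq_range, Set.range_id', Set.preimage_univ, Set.image_univ,
        b.span_eq]) i
  rw [hspan, b.mem_span_image] at hx
  exact Finsupp.notMem_support_iff.1 fun h => hk (hx h)

theorem linearIndependent_of_triangular {R M ι : Type*} [CommRing R] [NoZeroDivisors R]
    [AddCommGroup M] [Module R M] [PartialOrder ι] (v : ι → M) (f : ι → M →ₗ[R] R)
    (hdiag : ∀ a, f a (v a) ≠ 0) (htri : ∀ a b, f a (v b) ≠ 0 → a ≤ b) :
    LinearIndependent R v := by
  rw [linearIndependent_iff]
  intro l hl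
  by_contra hl0
  obtain ⟨a, ha⟩ := l.support.exists_maximal (Finsupp.support_nonempty_iff.2 hl0)
  have hfa : f a (Finsupp.linearCombination R v l) = l a * f a (v a) := by
    rw [Finsupp.linearCombination_apply, map_finsuppSum, Finsupp.sum, Finset.sum_eq_single a]
    · rw [map_smul, smul_eq_mul]
    · intro b hb hba
      rw [map_smul, smul_eq_mul, mul_eq_zero]
      by_contra! h
      exact hba (le_antisymm (ha.2 hb (htri a b h.2)) (htri a b h.2))
    · exact fun h => absurd ha.1 h
  rw [hl, map_zero] at hfa
  exact mul_ne_zero (Finsupp.mem_support_iff.1 ha.1) (hdiag a) hfa.symm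

end GeneralLinearAlgebra

section GradedFree

variable {P R}

omit [DecidableEq P] in
theorem tp_coe (g : AddSubmonoid.nonneg P) : tp P R g = AddMonoidAlgebra.single g 1 := by
  unfold tp
  exact dif_pos g.2

theorem Dsub_le_deg (M : PersMod P R) (r : P) : Dsub P R M r ≤ M.deg r :=
  iSup_le fun q => Submodule.map_le_iff_le_comap.2 fun y hy => by
    have := M.tp_smul_mem _ (sub_nonneg.2 q.2.le) _ y hy
    rwa [add_sub_cancel] at this

theorem map_Dsub_le {M F : PersMod P R} (φ : M.carrier →ₗ[PersAlg P R] F.carrier)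
    (hφ : ∀ a, ∀ x ∈ M.deg a, φ x ∈ F.deg a) (r : P) :
    (Dsub P R M r).map (φ.restrictScalars R) ≤ Dsub P R F r := by
  rw [Dsub, Submodule.map_iSup]
  refine iSup_mono fun q => ?_
  rintro _ ⟨_, ⟨y, hy, rfl⟩, rfl⟩
  exact ⟨φ y, hφ _ _ hy, (map_smul φ _ y).symm⟩

variable {F : PersMod P R} {Λ : Type} {d : Λ → P} {bb : Module.Basis Λ (PersAlg P R) F.carrier}
  {r : P} {y : F.carrier} {η : Λ}

noncomputable def monomialBasis (bb : Module.Basis Λ (PersAlg P R) F.carrier) :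
    Module.Basis (AddSubmonoid.nonneg P × Λ) R F.carrier :=
  (AddMonoidAlgebra.basis _ R).smulTower bb

theorem monomialBasis_apply (k : AddSubmonoid.nonneg P × Λ) :
    monomialBasis bb k = tp P R k.1 • bb k.2 := by
  rw [monomialBasis, Module.Basis.smulTower_apply, AddMonoidAlgebra.basis_apply, tp_coe]

theorem monomialBasis_repr (x : F.carrier) (k : AddSubmonoid.nonneg P × Λ) :
    (monomialBasis bb).repr x k = (bb.repr x k.2).coeff k.1 :=
  Module.Basis.smulTower_repr _ _ x k

theorem coeff_repr_eq_zero_of_mem_deg (hbb : ∀ η, bb η ∈ F.deg (d η)) (hy : y ∈ F.deg r)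
    {g : AddSubmonoid.nonneg P} (hg : d η + g ≠ r) : (bb.repr y η).coeff g = 0 := by
  simpa only [monomialBasis_repr] using (monomialBasis bb).repr_eq_zero_of_mem_of_iSupIndep
    F.isInternal.submodule_iSupIndep (fun k => d k.2 + k.1)
    (fun k => by rw [monomialBasis_apply]; exact F.tp_smul_mem _ k.1.2 _ _ (hbb k.2))
    hy (k := (g, η)) hg

theorem repr_eq_single_of_mem_deg (hbb : ∀ η, bb η ∈ F.deg (d η)) (hy : y ∈ F.deg r)
    {g : AddSubmonoid.nonneg P} (hg : d η + g = r) :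
    bb.repr y η = AddMonoidAlgebra.single g ((bb.repr y η).coeff g) := by
  ext g'
  rw [AddMonoidAlgebra.coeff_single, Finsupp.single_apply]
  split_ifs with h
  · rw [h]
  · exact coeff_repr_eq_zero_of_mem_deg hbb hy fun h' =>
      h (Subtype.ext (add_left_cancel (hg.trans h'.symm)))

theorem repr_eq_zero_of_mem_deg (hbb : ∀ η, bb η ∈ F.deg (d η)) (hy : y ∈ F.deg r)
    (h : ¬ d η ≤ r) : bb.repr y η = 0 := by
  ext g
  rw [AddMonoidAlgebra.coeff_zero, Finsupp.zero_apply]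
  exact coeff_repr_eq_zero_of_mem_deg hbb hy fun h' => h (h' ▸ le_add_of_nonneg_right g.2)

theorem mem_Dsub_of_coeff_repr_eq_zero (hbb : ∀ η, bb η ∈ F.deg (d η)) (hy : y ∈ F.deg r)
    (h0 : ∀ η, d η = r → (bb.repr y η).coeff 0 = 0) : y ∈ Dsub P R F r := by
  rw [← bb.linearCombination_repr y, Finsupp.linearCombination_apply]
  refine Submodule.finsuppSum_mem _ _ _ _ fun η _ => ?_
  by_cases hle : d η ≤ r
  swap
  · rw [repr_eq_zero_of_mem_deg hbb hy hle, zero_smul]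
    exact zero_mem _
  rcases hle.lt_or_eq with hlt | heq
  · set g : AddSubmonoid.nonneg P := ⟨r - d η, sub_nonneg.2 hle⟩
    set c := (bb.repr y η).coeff g
    have hsingle : AddMonoidAlgebra.single g c = c • tp P R g := by
      rw [tp_coe, AddMonoidAlgebra.smul_single', mul_one]
    rw [repr_eq_single_of_mem_deg hbb hy (g := g) (add_sub_cancel _ _), hsingle, smul_assoc]
    exact Submodule.smul_mem _ _ <|
      Submodule.mem_iSup_of_mem ⟨d η, hlt⟩ ⟨bb η, hbb η, rfl⟩
  · rw [repr_eq_single_of_mem_deg hbb hy (g := 0) (by simpa using heq), h0 η heq,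
      AddMonoidAlgebra.single_zero, zero_smul]
    exact zero_mem _

theorem exists_coeff_repr_ne_zero_of_notMem_Dsub (hbb : ∀ η, bb η ∈ F.deg (d η))
    (hy : y ∈ F.deg r) (hyD : y ∉ Dsub P R F r) :
    ∃ η, d η = r ∧ (bb.repr y η).coeff 0 ≠ 0 := by
  by_contra! h
  exact hyD (mem_Dsub_of_coeff_repr_eq_zero hbb hy h)

theorem linearIndependent_tp_sub_smul [IsDomain R] (hbb : ∀ η, bb η ∈ F.deg (d η)) {i : P}
    {T : Set P} (hT : ∀ r ∈ T, r ≤ i) {y : T → F.carrier} (hy : ∀ r : T, y r ∈ F.deg r)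
    {η : T → Λ} (hη : ∀ r, d (η r) = r) (hc : ∀ r, (bb.repr (y r) (η r)).coeff 0 ≠ 0) :
    LinearIndependent R fun r : T => tp P R (i - r) • y r := by
  let g : T → AddSubmonoid.nonneg P := fun r => ⟨i - r, sub_nonneg.2 (hT r r.2)⟩
  refine linearIndependent_of_triangular _
    (fun a => (monomialBasis bb).coord (g a, η a)) (fun a => ?_) (fun a b hab => ?_)
  all_goals simp only [Module.Basis.coord_apply, monomialBasis_repr] at *
  · rw [map_smul, tp_coe (g a), Finsupp.smul_apply,
      repr_eq_single_of_mem_deg hbb (hy a) (η := η a) (g := 0) (by simp [hη]),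
      smul_eq_mul, AddMonoidAlgebra.single_mul_single, add_zero, one_mul,
      AddMonoidAlgebra.coeff_single, Finsupp.single_eq_same]
    exact hc a
  · by_contra hba
    rw [map_smul, Finsupp.smul_apply, repr_eq_zero_of_mem_deg hbb (hy b) (by rwa [hη]),
      smul_zero] at hab
    exact hab rfl

end GradedFree

theorem sum_b_finite [IsDomain R] [IsPrincipalIdealRing R]
    (M : PersMod P R) (hproj : IsGradedProjective P R M) (hFG : ∀ a : P, (M.deg a).FG)
    (i : P) :
    {r : P | r < i ∧ Dsub P R M r ≠ M.deg r}.Finite ∧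
    ∀ r, r < i → Module.Finite R (↥(M.deg r) ⧸ ((Dsub P R M r).comap (M.deg r).subtype)) := by
  have hfin : ∀ a, Module.Finite R (M.deg a) := fun a => Module.Finite.iff_fg.2 (hFG a)
  refine ⟨?_, fun r _ => Module.Finite.of_surjective _ (Submodule.mkQ_surjective _)⟩
  obtain ⟨F, ⟨Λ, d, bb, hbb⟩, ι, π, hι, hπ, hπι⟩ := hproj
  set T := {r : P | r < i ∧ Dsub P R M r ≠ M.deg r}
  choose x hx hxD using fun r : T => SetLike.exists_of_lt ((Dsub_le_deg M r).lt_of_ne r.2.2)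
  have hιx : ∀ r : T, ι (x r) ∉ Dsub P R F r := fun r h => hxD r <| by
    simpa [← LinearMap.comp_apply, hπι] using map_Dsub_le π hπ r ⟨_, h, rfl⟩
  choose η hη hc using fun r : T =>
    exists_coeff_repr_ne_zero_of_notMem_Dsub hbb (hι _ _ (hx r)) (hιx r)
  let v : T → M.deg i := fun r =>
    ⟨tp P R (i - r) • x r, by simpa using M.tp_smul_mem _ (sub_nonneg.2 r.2.1.le) _ _ (hx r)⟩
  have hv : LinearIndependent R v :=
    .of_comp ((ι.restrictScalars R).comp (M.deg i).subtype) <| by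
      simpa [v, Function.comp_def] using
        linearIndependent_tp_sub_smul hbb (fun r hr => hr.1.le) (fun r => hι _ _ (hx r)) hη hc
  have := isNoetherian_of_isNoetherianRing_of_finite R (M.deg i)
  exact Set.finite_coe_iff.1 hv.finite_of_isNoetherian
end

section
/- Let M = ⊕_{i ∈ ℤ} M_i be a ℤ-graded module over the polynomial ring ℝ[t] (t homogeneous of degree 1, so t · M_i ⊆ M_{i+1}) such that each M_i is a finite-dimensional real vector space. Assume: (1) there exists α ∈ ℤ with M_i = 0 for all i < α; (2) for every i ∈ ℤ, multiplication by t gives an injective map M_i → M_{i+1}; (3) there exists β ∈ ℤ such that for every i > β, multiplication by t gives an isomorphism M_i → M_{i+1}. Then M is graded free over ℝ[t]: it admits a finite ℝ[t]-basis consisting of homogeneous elements. -/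
/-!
Write `T` for multiplication by `X`. In every degree `d` choose a complement `W d` of
`T (ℳ (d - 1))` in `ℳ d`, together with a basis of it. Since `T` is injective on each graded
piece and `ℳ` vanishes below `α`, induction on `d` shows that the vectors `X ^ m • w`, with `w`
running through the chosen basis of `W (d - m)`, form a basis of `ℳ d`. Taken over all degrees,
they form an `ℝ`-basis of `M`, which says exactly that the chosen vectors form an `ℝ[X]`-basis
of `M`. It is finite: `W d = 0` for `d < α`, and for `d > β + 1` because there `T` maps
`ℳ (d - 1)` onto `ℳ d`.
-/

open Polynomial Module Submodule

structure IsBasisOn (R : Type*) {M ι : Type*} [Semiring R] [AddCommMonoid M] [Module R M]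
    (v : ι → M) (s : Set ι) (N : Submodule R M) : Prop where
  linearIndepOn : LinearIndepOn R v s
  span_eq : span R (v '' s) = N

section PolynomialBasis

variable {R M ι : Type*} [CommRing R] [AddCommGroup M] [Module R M] [Module R[X] M]
  [IsScalarTower R R[X] M]

theorem bijective_linearCombination_of_basis_X_pow_smul (b : ι → M) (B : Basis (ι × ℕ) R M)
    (hB : ∀ p, B p = (X : R[X]) ^ p.2 • b p.1) :
    Function.Bijective (Finsupp.linearCombination R[X] b) := by
  let F : Basis (Σ _ : ι, ℕ) R (ι →₀ R[X]) := Finsupp.basis fun _ => basisMonomials R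
  have hF : (Finsupp.linearCombination R[X] b).restrictScalars R =
      (F.equiv B (Equiv.sigmaEquivProd ι ℕ) : (ι →₀ R[X]) →ₗ[R] M) := by
    refine F.ext fun ⟨i, m⟩ => ?_
    rw [LinearMap.restrictScalars_apply, LinearEquiv.coe_coe, Basis.equiv_apply, hB]
    simp [F, X_pow_eq_monomial]
  have := (F.equiv B (Equiv.sigmaEquivProd ι ℕ)).bijective
  rwa [← LinearEquiv.coe_coe, ← hF, LinearMap.coe_restrictScalars] at this

theorem exists_basis_of_basis_X_pow_smul (b : ι → M) (B : Basis (ι × ℕ) R M)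
    (hB : ∀ p, B p = (X : R[X]) ^ p.2 • b p.1) : ∃ C : Basis ι R[X] M, ⇑C = b := by
  have h := bijective_linearCombination_of_basis_X_pow_smul b B hB
  refine ⟨.mk h.1 ?_, Basis.coe_mk _ _⟩
  rw [← Finsupp.range_linearCombination, LinearMap.range_eq_top.mpr h.2]

end PolynomialBasis

section Graded

variable {R M κ ι : Type*} [Ring R] [AddCommGroup M] [Module R M]

theorem DirectSum.IsInternal.exists_basis_of_isBasisOn_fibers [DecidableEq ι]
    {ℳ : ι → Submodule R M} (h : DirectSum.IsInternal ℳ) (v : κ → M) (deg : κ → ι)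
    (hv : ∀ d, IsBasisOn R v {p | deg p = d} (ℳ d)) : ∃ B : Basis κ R M, ⇑B = v := by
  let bd d : Basis {p | deg p = d} R (ℳ d) := (Basis.span (hv d).linearIndepOn).map
    (LinearEquiv.ofEq _ _ (by rw [← Set.image_eq_range, (hv d).span_eq]))
  refine ⟨(h.collectedBasis bd).reindex (Equiv.sigmaFiberEquiv deg), funext fun p => ?_⟩
  simp only [bd, Basis.reindex_apply, DirectSum.IsInternal.collectedBasis_coe, Basis.map_apply,
    LinearEquiv.coe_ofEq_apply]
  exact congrArg Subtype.val (Basis.span_apply (hv _).linearIndepOn _)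

theorem Module.Basis.isBasisOn_sigma_fiber {κ : ι → Type*} (W : ι → Submodule R M)
    (c : ∀ d, Basis (κ d) R (W d)) (d : ι) :
    IsBasisOn R (fun k : Σ e, κ e => (c k.1 k.2 : M)) (Sigma.fst ⁻¹' {d}) (W d) := by
  rw [← Set.range_sigmaMk]
  refine ⟨(linearIndepOn_range_iff sigma_mk_injective _).mpr
    ((c d).linearIndependent.map' (W d).subtype (ker_subtype _)), ?_⟩
  rw [← Set.range_comp]
  change span R (Set.range ((W d).subtype ∘ c d)) = W d
  rw [Set.range_comp, span_image, (c d).span_eq, Submodule.map_top, range_subtype]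

end Graded

theorem Finite.sigma_of_isEmpty_of_notMem {α : Type*} {κ : α → Type*} [∀ a, Finite (κ a)]
    {s : Set α} (hs : s.Finite) (h : ∀ a ∉ s, IsEmpty (κ a)) : Finite (Σ a, κ a) := by
  have := hs.to_subtype
  refine Finite.of_surjective (fun k : Σ a : s, κ a => ⟨k.1, k.2⟩) fun ⟨a, k⟩ => ?_
  by_cases ha : a ∈ s
  · exact ⟨⟨⟨a, ha⟩, k⟩, rfl⟩
  · exact (h a ha).elim k

section Iterates

variable {K V ι : Type*} [Field K] [AddCommGroup V] [Module K V] (δ : ι → ℤ)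

theorem fiber_succ_eq_union (d : ℤ) :
    {p : ι × ℕ | δ p.1 + p.2 = d + 1} =
      (fun i => (i, 0)) '' (δ ⁻¹' {d + 1}) ∪
        (fun p : ι × ℕ => (p.1, p.2 + 1)) '' {p : ι × ℕ | δ p.1 + p.2 = d} := by
  ext ⟨i, m⟩
  cases m with
  | zero => simp
  | succ m =>
    simp only [Set.mem_ofPred_eq, Nat.cast_add, Nat.cast_one, Set.mem_union, Set.mem_image,
      Set.mem_preimage, Set.mem_singleton_iff, Prod.mk.injEq, Nat.right_eq_add,
      Nat.add_eq_zero_iff, one_ne_zero, and_false, exists_false, Nat.add_right_cancel_iff,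
      Prod.exists, exists_eq_right_right, exists_eq_right, false_or]
    omega

variable {δ} (T : V →ₗ[K] V) (ℳ W : ℤ → Submodule K V) (b : ι → V)

theorem isBasisOn_pow_apply_fiber_succ {d : ℤ} (hT : Disjoint (ℳ d) (LinearMap.ker T))
    (hb : IsBasisOn K b (δ ⁻¹' {d + 1}) (W (d + 1)))
    (hdisj : Disjoint ((ℳ d).map T) (W (d + 1))) (hsup : (ℳ d).map T ⊔ W (d + 1) = ℳ (d + 1))
    (ih : IsBasisOn K (fun p : ι × ℕ => (T ^ p.2) (b p.1)) {p | δ p.1 + p.2 = d} (ℳ d)) :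
    IsBasisOn K (fun p : ι × ℕ => (T ^ p.2) (b p.1)) {p | δ p.1 + p.2 = d + 1} (ℳ (d + 1)) := by
  set v := fun p : ι × ℕ => (T ^ p.2) (b p.1)
  have hv_zero : v ∘ (fun i => (i, 0)) = b := by
    ext i
    simp [v]
  have hv_succ : v ∘ (fun p : ι × ℕ => (p.1, p.2 + 1)) = T ∘ v := by
    ext p
    simp [v, pow_succ']
  have hspan_zero : span K (v '' ((fun i => (i, 0)) '' (δ ⁻¹' {d + 1}))) = W (d + 1) := by
    rw [← Set.image_comp, hv_zero, hb.span_eq]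
  have hspan_succ : span K (v '' ((fun p : ι × ℕ => (p.1, p.2 + 1)) '' {p | δ p.1 + p.2 = d})) =
      (ℳ d).map T := by
    rw [← Set.image_comp, hv_succ, Set.image_comp, span_image, ih.span_eq]
  rw [fiber_succ_eq_union]
  refine ⟨.union (.image_of_comp _ _ (hv_zero ▸ hb.linearIndepOn)) (.image_of_comp _ _ ?_) ?_, ?_⟩
  · rw [hv_succ]
    exact ih.linearIndepOn.map_injOn T
      (LinearMap.injOn_of_disjoint_ker le_rfl (ih.span_eq ▸ hT))
  · rw [hspan_zero, hspan_succ]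
    exact hdisj.symm
  · rw [Set.image_union, span_union, hspan_zero, hspan_succ, sup_comm, hsup]

theorem isBasisOn_pow_apply_fiber (α : ℤ) (hbot : ∀ d < α, ℳ d = ⊥)
    (hT : ∀ d, Disjoint (ℳ d) (LinearMap.ker T)) (hb : ∀ d, IsBasisOn K b (δ ⁻¹' {d}) (W d))
    (hdisj : ∀ d, Disjoint ((ℳ d).map T) (W (d + 1)))
    (hsup : ∀ d, (ℳ d).map T ⊔ W (d + 1) = ℳ (d + 1)) (d : ℤ) :
    IsBasisOn K (fun p : ι × ℕ => (T ^ p.2) (b p.1)) {p | δ p.1 + p.2 = d} (ℳ d) := by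
  have hα (i : ι) : α ≤ δ i := by
    by_contra! hi
    have hmem : b i ∈ ℳ (δ i - 1 + 1) :=
      hsup (δ i - 1) ▸ mem_sup_right ((hb _).span_eq ▸ subset_span ⟨i, by simp, rfl⟩)
    rw [sub_add_cancel, hbot _ hi, mem_bot] at hmem
    exact (hb (δ i)).linearIndepOn.zero_notMem_image ⟨i, rfl, hmem⟩
  have hlow (d : ℤ) (hd : d < α) :
      IsBasisOn K (fun p : ι × ℕ => (T ^ p.2) (b p.1)) {p | δ p.1 + p.2 = d} (ℳ d) := by
    have hempty : {p : ι × ℕ | δ p.1 + p.2 = d} = ∅ :=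
      Set.eq_empty_of_forall_notMem fun p (hp : δ p.1 + p.2 = d) => by have := hα p.1; omega
    rw [hempty, hbot d hd]
    exact ⟨linearIndepOn_empty _ _, by simp⟩
  induction d using Int.inductionOn' (b := α - 1) with
  | zero => exact hlow _ (by omega)
  | succ k _ ih => exact isBasisOn_pow_apply_fiber_succ T ℳ W b (hT k) (hb _) (hdisj k) (hsup k) ih
  | pred k _ _ => exact hlow _ (by omega)

end Iterates

section GradedPolynomialModule

variable {K M : Type*} [Field K] [AddCommGroup M] [Module K M] [Module K[X] M]
  [IsScalarTower K K[X] M] {ℳ : ℤ → Submodule K M}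

local notation "μX" => Algebra.lsmul K K M (X : K[X])

theorem exists_basis_of_graded_complements (h : DirectSum.IsInternal ℳ) (α : ℤ)
    (hbot : ∀ d < α, ℳ d = ⊥) (hker : ∀ d, Disjoint (ℳ d) (LinearMap.ker μX))
    (W : ℤ → Submodule K M) [∀ d, FiniteDimensional K (W d)]
    (hdisj : ∀ d, Disjoint ((ℳ d).map μX) (W (d + 1)))
    (hsup : ∀ d, (ℳ d).map μX ⊔ W (d + 1) = ℳ (d + 1)) :
    ∃ C : Basis (Σ d, Fin (finrank K (W d))) K[X] M, ∀ k, C k ∈ W k.1 := by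
  classical
  let b : (Σ d, Fin (finrank K (W d))) → M := fun k => (finBasis K (W k.1) k.2 : M)
  have hv := isBasisOn_pow_apply_fiber _ ℳ W b α hbot hker
    (Module.Basis.isBasisOn_sigma_fiber W fun d => finBasis K (W d)) hdisj hsup
  obtain ⟨B, hB⟩ := h.exists_basis_of_isBasisOn_fibers _ _ hv
  obtain ⟨C, hC⟩ := exists_basis_of_basis_X_pow_smul b B (by simp [hB, ← map_pow])
  exact ⟨C, fun k => hC ▸ (finBasis K (W k.1) k.2).2⟩

theorem exists_finite_homogeneous_basis (h : DirectSum.IsInternal ℳ)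
    [∀ d, FiniteDimensional K (ℳ d)] (α β : ℤ) (hbot : ∀ d < α, ℳ d = ⊥)
    (hker : ∀ d, Disjoint (ℳ d) (LinearMap.ker μX)) (hmap_le : ∀ d, (ℳ d).map μX ≤ ℳ (d + 1))
    (hle_map : ∀ d, β < d → ℳ (d + 1) ≤ (ℳ d).map μX) :
    ∃ (m : ℕ) (dg : Fin m → ℤ) (C : Basis (Fin m) K[X] M), ∀ j, C j ∈ ℳ (dg j) := by
  choose W hWdisj hWsup using
    fun d => IsModularLattice.exists_disjoint_and_sup_eq (hmap_le (d - 1))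
  have hW_le (d : ℤ) : W d ≤ ℳ d := by simpa using le_sup_right.trans (hWsup d).le
  have (d : ℤ) : FiniteDimensional K (W d) := Submodule.finiteDimensional_of_le (hW_le d)
  obtain ⟨C, hC⟩ := exists_basis_of_graded_complements h α hbot hker W
    (fun d => by simpa using hWdisj (d + 1)) (fun d => by simpa using hWsup (d + 1))
  have hW_bot (d : ℤ) (hd : d ∉ Set.Icc α (β + 1)) : W d = ⊥ := by
    rcases not_and_or.mp hd with hd | hd
    · exact eq_bot_iff.mpr ((hW_le d).trans (hbot d (not_le.mp hd)).le)
    · have hsurj := hle_map (d - 1) (by omega)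
      rw [sub_add_cancel] at hsurj
      exact (hWdisj d).eq_bot_of_ge ((hW_le d).trans hsurj)
  have : Finite (Σ d, Fin (finrank K (W d))) :=
    Finite.sigma_of_isEmpty_of_notMem (Set.finite_Icc α (β + 1)) fun d hd => by
      rw [Submodule.finrank_eq_zero.mpr (hW_bot d hd)]
      infer_instance
  have := Fintype.ofFinite (Σ d, Fin (finrank K (W d)))
  let e := Fintype.equivFin (Σ d, Fin (finrank K (W d)))
  refine ⟨_, fun j => (e.symm j).1, C.reindex e, fun j => ?_⟩
  rw [Basis.reindex_apply]
  exact hW_le _ (hC _)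

end GradedPolynomialModule

/-- A persistence module over `ℝ` indexed by `ℤ`, viewed as a `ℤ`-graded module
`M = ⊕_{i ∈ ℤ} M_i` over the polynomial ring `ℝ[t]` (with `t` homogeneous of degree `1`,
so `t • M_i ⊆ M_{i+1}`), with every graded piece finite dimensional, is graded free
(it admits a finite `ℝ[t]`-basis of homogeneous elements) provided that:
(1) `M_i = 0` for `i < α`;
(2) multiplication by `t` is injective `M_i → M_{i+1}` for every `i`;
(3) multiplication by `t` is an isomorphism `M_i → M_{i+1}` (i.e. also surjective)
for every `i > β`. -/
theorem int_indexed_graded_free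
    (M : Type) [AddCommGroup M] [Module ℝ M] [Module (Polynomial ℝ) M]
    [IsScalarTower ℝ (Polynomial ℝ) M]
    (ℳ : ℤ → Submodule ℝ M) (hinternal : DirectSum.IsInternal ℳ)
    (hsmul : ∀ (i : ℤ) (x : M), x ∈ ℳ i → (Polynomial.X : Polynomial ℝ) • x ∈ ℳ (i + 1))
    (hfin : ∀ i : ℤ, FiniteDimensional ℝ ↥(ℳ i))
    (α : ℤ) (hα : ∀ i : ℤ, i < α → ℳ i = ⊥)
    (hinj : ∀ (i : ℤ) (x y : M), x ∈ ℳ i → y ∈ ℳ i →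
      (Polynomial.X : Polynomial ℝ) • x = (Polynomial.X : Polynomial ℝ) • y → x = y)
    (β : ℤ) (hsurj : ∀ i : ℤ, β < i → ∀ z ∈ ℳ (i + 1), ∃ x ∈ ℳ i,
      (Polynomial.X : Polynomial ℝ) • x = z) :
    ∃ (m : ℕ) (dg : Fin m → ℤ) (b : Module.Basis (Fin m) (Polynomial ℝ) M),
      ∀ j, b j ∈ ℳ (dg j) := by
  refine exists_finite_homogeneous_basis hinternal α β hα (fun d => ?_) (fun d => ?_)
    (fun d hd => ?_)
  · exact disjoint_def.mpr fun x hx hxX => hinj d x 0 hx (zero_mem _) (by simpa using hxX)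
  · rintro _ ⟨x, hx, rfl⟩
    exact hsmul d x hx
  · intro z hz
    obtain ⟨x, hx, rfl⟩ := hsurj d hd z hz
    exact ⟨x, hx, rfl⟩
end

section
/- Let {M_{i,j}}_{(i,j) ∈ ℤ²} be a family of real vector spaces together with injective linear maps H_{i,j} : M_{i,j} → M_{i+1,j} and V_{i,j} : M_{i,j} → M_{i,j+1} satisfying V_{i+1,j} ∘ H_{i,j} = H_{i,j+1} ∘ V_{i,j} for all i, j. Assume that for all i, j ∈ ℤ: range(H_{i,j+1}) ∩ range(V_{i+1,j}) = range(V_{i+1,j} ∘ H_{i,j}) inside M_{i+1,j+1}. Then for all i, j ∈ ℤ and all natural numbers r, s ≥ 1: range(H^{(r)}_{i,j+s}) ∩ range(V^{(s)}_{i+r,j}) = range(f^{(i+r,j+s)}_{(i,j)}) inside M_{i+r,j+s}, where H^{(r)}_{i,j} : M_{i,j} → M_{i+r,j} denotes the r-fold composite of horizontal maps, V^{(s)}_{i,j} : M_{i,j} → M_{i,j+s} the s-fold composite of vertical maps, and f^{(i+r,j+s)}_{(i,j)} = V^{(s)}_{i+r,j} ∘ H^{(r)}_{i,j} : M_{i,j}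 → M_{i+r,j+s} the diagonal composite. -/
variable (Mc : ℤ → ℤ → Type) [∀ i j, AddCommGroup (Mc i j)] [∀ i j, Module ℝ (Mc i j)]

/-- Transport along equalities of the indices, as a linear map. -/
def castMap {i i' j j' : ℤ} (h : i = i') (h' : j = j') : Mc i j →ₗ[ℝ] Mc i' j' := by
  subst h; subst h'; exact LinearMap.id

/-- `r`-fold composite of the horizontal maps, `H^{(r)}_{i,j} : M_{i,j} → M_{i+r,j}`. -/
def Hpow (H : ∀ i j, Mc i j →ₗ[ℝ] Mc (i + 1) j) :
    (r : ℕ) → (i j : ℤ) → (Mc i j →ₗ[ℝ] Mc (i + r) j)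
  | 0, i, j => castMap Mc (by simp) rfl
  | (r + 1), i, j =>
      (castMap Mc (by push_cast; ring) rfl).comp ((H (i + r) j).comp (Hpow H r i j))

/-- `s`-fold composite of the vertical maps, `V^{(s)}_{i,j} : M_{i,j} → M_{i,j+s}`. -/
def Vpow (V : ∀ i j, Mc i j →ₗ[ℝ] Mc i (j + 1)) :
    (s : ℕ) → (i j : ℤ) → (Mc i j →ₗ[ℝ] Mc i (j + s))
  | 0, i, j => castMap Mc rfl (by simp)
  | (s + 1), i, j =>
      (castMap Mc rfl (by push_cast; ring)).comp ((V i (j + s)).comp (Vpow V s i j))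

section Helpers

lemma castMap_surj {i i' j j' : ℤ} (h : i = i') (h' : j = j') :
    Function.Surjective (castMap Mc h h') := by
  subst h; subst h'; exact fun x => ⟨x, rfl⟩

lemma castMap_inj {i i' j j' : ℤ} (h : i = i') (h' : j = j') :
    Function.Injective (castMap Mc h h') := by
  subst h; subst h'; exact fun a b hab => hab

lemma castMap_V (V : ∀ i j, Mc i j →ₗ[ℝ] Mc i (j + 1)) {i i' : ℤ} (h : i = i') (j : ℤ)
    (x : Mc i j) :
    V i' j (castMap Mc h rfl x) = castMap Mc h rfl (V i j x) := by
  subst h; rfl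

lemma Hpow_castMap (H : ∀ i j, Mc i j →ₗ[ℝ] Mc (i + 1) j) (r : ℕ) {i i' j j' : ℤ}
    (h : i = i') (h' : j = j') (x : Mc i j) :
    Hpow Mc H r i' j' (castMap Mc h h' x) = castMap Mc (by rw [h]) h' (Hpow Mc H r i j x) := by
  subst h; subst h'; rfl

lemma Hpow_zero (H : ∀ i j, Mc i j →ₗ[ℝ] Mc (i + 1) j) (i j : ℤ) (x : Mc i j) :
    Hpow Mc H 0 i j x = castMap Mc (by simp) rfl x := rfl

lemma Hpow_succ (H : ∀ i j, Mc i j →ₗ[ℝ] Mc (i + 1) j) (r : ℕ) (i j : ℤ) (x : Mc i j) :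
    Hpow Mc H (r + 1) i j x =
      castMap Mc (by push_cast; ring) rfl (H (i + r) j (Hpow Mc H r i j x)) := rfl

lemma Vpow_zero (V : ∀ i j, Mc i j →ₗ[ℝ] Mc i (j + 1)) (i j : ℤ) (x : Mc i j) :
    Vpow Mc V 0 i j x = castMap Mc rfl (by simp) x := rfl

lemma Vpow_succ (V : ∀ i j, Mc i j →ₗ[ℝ] Mc i (j + 1)) (s : ℕ) (i j : ℤ) (x : Mc i j) :
    Vpow Mc V (s + 1) i j x =
      castMap Mc rfl (by push_cast; ring) (V i (j + s) (Vpow Mc V s i j x)) := rfl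

lemma elem_hcomm (H : ∀ i j, Mc i j →ₗ[ℝ] Mc (i + 1) j) (V : ∀ i j, Mc i j →ₗ[ℝ] Mc i (j + 1))
    (hcomm : ∀ i j, (V (i + 1) j).comp (H i j) = (H i (j + 1)).comp (V i j))
    (i j : ℤ) (x : Mc i j) :
    V (i + 1) j (H i j x) = H i (j + 1) (V i j x) := LinearMap.congr_fun (hcomm i j) x

lemma V_Hpow (H : ∀ i j, Mc i j →ₗ[ℝ] Mc (i + 1) j) (V : ∀ i j, Mc i j →ₗ[ℝ] Mc i (j + 1))
    (hcomm : ∀ i j, (V (i + 1) j).comp (H i j) = (H i (j + 1)).comp (V i j))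
    (r : ℕ) (i j : ℤ) (x : Mc i j) :
    V (i + (r : ℤ)) j (Hpow Mc H r i j x) = Hpow Mc H r i (j + 1) (V i j x) := by
  induction r with
  | zero =>
      rw [Hpow_zero, Hpow_zero, castMap_V]
  | succ r ih =>
      rw [Hpow_succ, Hpow_succ, castMap_V, elem_hcomm Mc H V hcomm, ih]

lemma Vpow_Hpow (H : ∀ i j, Mc i j →ₗ[ℝ] Mc (i + 1) j) (V : ∀ i j, Mc i j →ₗ[ℝ] Mc i (j + 1))
    (hcomm : ∀ i j, (V (i + 1) j).comp (H i j) = (H i (j + 1)).comp (V i j))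
    (r s : ℕ) (i j : ℤ) (x : Mc i j) :
    Vpow Mc V s (i + (r : ℤ)) j (Hpow Mc H r i j x) =
      Hpow Mc H r i (j + (s : ℤ)) (Vpow Mc V s i j x) := by
  induction s with
  | zero =>
      rw [Vpow_zero, Vpow_zero, Hpow_castMap]
  | succ s ih =>
      rw [Vpow_succ, Vpow_succ, ih, V_Hpow Mc H V hcomm, Hpow_castMap]

lemma range_diag_le (H : ∀ i j, Mc i j →ₗ[ℝ] Mc (i + 1) j)
    (V : ∀ i j, Mc i j →ₗ[ℝ] Mc i (j + 1))
    (hcomm : ∀ i j, (V (i + 1) j).comp (H i j) = (H i (j + 1)).comp (V i j))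
    (r s : ℕ) (i j : ℤ) :
    LinearMap.range ((Vpow Mc V s (i + r) j).comp (Hpow Mc H r i j)) ≤
      LinearMap.range (Hpow Mc H r i (j + s)) ⊓ LinearMap.range (Vpow Mc V s (i + r) j) := by
  rintro x ⟨u, rfl⟩
  refine Submodule.mem_inf.2 ⟨⟨Vpow Mc V s i j u, ?_⟩, ⟨Hpow Mc H r i j u, rfl⟩⟩
  exact (Vpow_Hpow Mc H V hcomm r s i j u).symm

lemma lemA (H : ∀ i j, Mc i j →ₗ[ℝ] Mc (i + 1) j) (V : ∀ i j, Mc i j →ₗ[ℝ] Mc i (j + 1))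
    (hHinj : ∀ i j, Function.Injective (H i j))
    (hVinj : ∀ i j, Function.Injective (V i j))
    (hcomm : ∀ i j, (V (i + 1) j).comp (H i j) = (H i (j + 1)).comp (V i j))
    (hbase : ∀ i j,
      LinearMap.range (H i (j + 1)) ⊓ LinearMap.range (V (i + 1) j) =
        LinearMap.range ((V (i + 1) j).comp (H i j))) :
    ∀ (r : ℕ) (i j : ℤ),
      LinearMap.range (Hpow Mc H r i (j + 1)) ⊓ LinearMap.range (V (i + (r : ℤ)) j) =
        LinearMap.range ((V (i + (r : ℤ)) j).comp (Hpow Mc H r i j)) := by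
  intro r i j
  induction r with
  | zero =>
      refine le_antisymm ?_ ?_
      · intro x hx
        obtain ⟨b, hb⟩ := (Submodule.mem_inf.1 hx).2
        obtain ⟨b', rfl⟩ := castMap_surj Mc (show i = i + ((0 : ℕ) : ℤ) by simp) rfl b
        exact ⟨b', hb⟩
      · rintro x ⟨u, rfl⟩
        refine Submodule.mem_inf.2 ⟨⟨V i j u, ?_⟩, ⟨Hpow Mc H 0 i j u, rfl⟩⟩
        exact (V_Hpow Mc H V hcomm 0 i j u).symm
  | succ r ih =>
      refine le_antisymm ?_ ?_
      · intro x hx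
        obtain ⟨⟨a, ha⟩, ⟨b, hb⟩⟩ := Submodule.mem_inf.1 hx
        rw [Hpow_succ] at ha
        obtain ⟨b', rfl⟩ :=
          castMap_surj Mc (show i + (r : ℤ) + 1 = i + ((r + 1 : ℕ) : ℤ) by push_cast; ring) rfl b
        rw [castMap_V] at hb
        have key : H (i + (r : ℤ)) (j + 1) (Hpow Mc H r i (j + 1) a) =
            V (i + (r : ℤ) + 1) j b' := by
          apply castMap_inj Mc (show i + (r : ℤ) + 1 = i + ((r + 1 : ℕ) : ℤ) by push_cast; ring) rfl
          rw [ha, hb]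
        have hy : H (i + (r : ℤ)) (j + 1) (Hpow Mc H r i (j + 1) a) ∈
            LinearMap.range (H (i + (r : ℤ)) (j + 1)) ⊓ LinearMap.range (V (i + (r : ℤ) + 1) j) :=
          Submodule.mem_inf.2 ⟨⟨Hpow Mc H r i (j + 1) a, rfl⟩, ⟨b', key.symm⟩⟩
        rw [hbase] at hy
        obtain ⟨w, hw⟩ := hy
        rw [LinearMap.comp_apply, elem_hcomm Mc H V hcomm] at hw
        have h2 : V (i + (r : ℤ)) j w = Hpow Mc H r i (j + 1) a := hHinj _ _ hw
        have h3 : V (i + (r : ℤ)) j w ∈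
            LinearMap.range (Hpow Mc H r i (j + 1)) ⊓ LinearMap.range (V (i + (r : ℤ)) j) :=
          Submodule.mem_inf.2 ⟨⟨a, h2.symm⟩, ⟨w, rfl⟩⟩
        rw [ih] at h3
        obtain ⟨u, hu⟩ := h3
        rw [LinearMap.comp_apply] at hu
        have h4 : Hpow Mc H r i j u = w := hVinj _ _ hu
        refine ⟨u, ?_⟩
        rw [LinearMap.comp_apply, Hpow_succ, castMap_V, elem_hcomm Mc H V hcomm, h4, h2, key]
        exact hb
      · rintro x ⟨u, rfl⟩
        refine Submodule.mem_inf.2 ⟨⟨V i j u, ?_⟩, ⟨Hpow Mc H (r + 1) i j u, rfl⟩⟩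
        exact (V_Hpow Mc H V hcomm (r + 1) i j u).symm

end Helpers

/-- For a `ℤ²`-indexed persistence module of real vector spaces with injective structure maps,
if `range(H_{i,j+1}) ∩ range(V_{i+1,j}) = range(V_{i+1,j} ∘ H_{i,j})` holds for all `i, j`,
then for all `r, s ≥ 1`,
`range(H^{(r)}_{i,j+s}) ∩ range(V^{(s)}_{i+r,j}) = range(V^{(s)}_{i+r,j} ∘ H^{(r)}_{i,j})`. -/
theorem range_inter_eq_range_diag
    (H : ∀ i j, Mc i j →ₗ[ℝ] Mc (i + 1) j) (V : ∀ i j, Mc i j →ₗ[ℝ] Mc i (j + 1))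
    (hHinj : ∀ i j, Function.Injective (H i j))
    (hVinj : ∀ i j, Function.Injective (V i j))
    (hcomm : ∀ i j, (V (i + 1) j).comp (H i j) = (H i (j + 1)).comp (V i j))
    (hbase : ∀ i j,
      LinearMap.range (H i (j + 1)) ⊓ LinearMap.range (V (i + 1) j) =
        LinearMap.range ((V (i + 1) j).comp (H i j))) :
    ∀ (r s : ℕ), 1 ≤ r → 1 ≤ s → ∀ i j : ℤ,
      LinearMap.range (Hpow Mc H r i (j + s)) ⊓ LinearMap.range (Vpow Mc V s (i + r) j) =
        LinearMap.range ((Vpow Mc V s (i + r) j).comp (Hpow Mc H r i j)) := by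
  intro r s _ hs i j
  clear hs
  induction s with
  | zero =>
      refine le_antisymm ?_ (range_diag_le Mc H V hcomm r 0 i j)
      intro x hx
      obtain ⟨a, ha⟩ := (Submodule.mem_inf.1 hx).1
      obtain ⟨a', rfl⟩ := castMap_surj Mc rfl (show j = j + ((0 : ℕ) : ℤ) by simp) a
      refine ⟨a', ?_⟩
      rw [LinearMap.comp_apply, Vpow_zero, ← ha, Hpow_castMap]
  | succ s ih =>
      refine le_antisymm ?_ (range_diag_le Mc H V hcomm r (s + 1) i j)
      intro x hx
      obtain ⟨⟨a, ha⟩, ⟨b, hb⟩⟩ := Submodule.mem_inf.1 hx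
      rw [Vpow_succ] at hb
      obtain ⟨a', rfl⟩ :=
        castMap_surj Mc rfl (show j + (s : ℤ) + 1 = j + ((s + 1 : ℕ) : ℤ) by push_cast; ring) a
      rw [Hpow_castMap] at ha
      have key : Hpow Mc H r i (j + (s : ℤ) + 1) a' =
          V (i + (r : ℤ)) (j + (s : ℤ)) (Vpow Mc V s (i + (r : ℤ)) j b) := by
        apply castMap_inj Mc rfl
          (show j + (s : ℤ) + 1 = j + ((s + 1 : ℕ) : ℤ) by push_cast; ring)
        rw [ha, hb]
      have hy : Hpow Mc H r i (j + (s : ℤ) + 1) a' ∈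
          LinearMap.range (Hpow Mc H r i (j + (s : ℤ) + 1)) ⊓
            LinearMap.range (V (i + (r : ℤ)) (j + (s : ℤ))) :=
        Submodule.mem_inf.2 ⟨⟨a', rfl⟩, ⟨Vpow Mc V s (i + (r : ℤ)) j b, key.symm⟩⟩
      rw [lemA Mc H V hHinj hVinj hcomm hbase r i (j + (s : ℤ))] at hy
      obtain ⟨w, hw⟩ := hy
      rw [LinearMap.comp_apply] at hw
      have h2 : Hpow Mc H r i (j + (s : ℤ)) w = Vpow Mc V s (i + (r : ℤ)) j b := by
        apply hVinj
        rw [hw, key]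
      have h3 : Hpow Mc H r i (j + (s : ℤ)) w ∈
          LinearMap.range (Hpow Mc H r i (j + (s : ℤ))) ⊓
            LinearMap.range (Vpow Mc V s (i + (r : ℤ)) j) :=
        Submodule.mem_inf.2 ⟨⟨w, rfl⟩, ⟨b, h2.symm⟩⟩
      rw [ih] at h3
      obtain ⟨u, hu⟩ := h3
      rw [LinearMap.comp_apply] at hu
      refine ⟨u, ?_⟩
      rw [LinearMap.comp_apply, Vpow_succ, hu, hw]
      exact ha
end
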